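/- arXiv:2412.17480 — 3 statements merged into one kernel-verified Lean document; each statement's English description precedes it below -/
import Mathlib

section
/- Let ρ be a pseudo-rank function on a regular ring R and e an idempotent. For every a ∈ Γ_R(e) there exists an idempotent f with f ≤ e, a ∈ Γ_R(f), and ρ(f) ≤ 2ρ(1−a). -/
theorem Gamma_small_support {R : Type*} [Ring R]
    (hreg : ∀ a : R, ∃ b : R, a * b * a = a)
    (ρ : R → ℝ)
    (hrange : ∀ a : R, ρ a ∈ Set.Icc (0 : ℝ) 1)
    (hone : ρ 1 = 1)
    (hmul : ∀ a b : R, ρ (a * b) ≤ min (ρ a) (ρ b))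
    (horthadd : ∀ e f : R, IsIdempotentElem e → IsIdempotentElem f →
        e * f = 0 → f * e = 0 → ρ (e + f) = ρ e + ρ f)
    (e : R) (he : IsIdempotentElem e)
    (a : R) (ha : a ∈ {x : R | IsUnit x ∧ ∃ y : R, x = e * y * e + 1 - e}) :
    ∃ f : R, IsIdempotentElem f ∧ e * f = f ∧ f * e = f ∧
      a ∈ {x : R | IsUnit x ∧ ∃ y : R, x = f * y * f + 1 - f} ∧
      ρ f ≤ 2 * ρ (1 - a) := by
  obtain ⟨hu, y, hay⟩ := ha
  have he' : e * e = e := he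
  obtain ⟨b, hbdef⟩ : ∃ b : R, b = 1 - a := ⟨_, rfl⟩
  have hb2 : b = e - e * y * e := by rw [hbdef, hay]; noncomm_ring
  have heb : e * b = b := by
    rw [hb2]; linear_combination (norm := noncomm_ring) he' - he' * (y * e)
  have hbe : b * e = b := by
    rw [hb2]; linear_combination (norm := noncomm_ring) he' - (e * y) * he'
  obtain ⟨c₀, hc₀⟩ := hreg b
  obtain ⟨c, hc⟩ : ∃ c : R, c = e * c₀ * e := ⟨_, rfl⟩
  have hec : e * c = c := by
    rw [hc]; linear_combination (norm := noncomm_ring) he' * (c₀ * e)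
  have hce : c * e = c := by
    rw [hc]; linear_combination (norm := noncomm_ring) (e * c₀) * he'
  have hbcb : b * c * b = b := by
    rw [hc]
    have h1 : b * (e * c₀ * e) * b = (b * e) * c₀ * (e * b) := by noncomm_ring
    rw [h1, hbe, heb, hc₀]
  obtain ⟨p, hp_def⟩ : ∃ p : R, p = b * c := ⟨_, rfl⟩
  obtain ⟨q, hq_def⟩ : ∃ q : R, q = c * b := ⟨_, rfl⟩
  have hp : p * p = p := by
    rw [hp_def]; linear_combination (norm := noncomm_ring) hbcb * c
  have hpb : p * b = b := by
    rw [hp_def]; linear_combination (norm := noncomm_ring) hbcb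
  have hbq : b * q = b := by
    rw [hq_def]; linear_combination (norm := noncomm_ring) hbcb
  have hep : e * p = p := by
    rw [hp_def]; linear_combination (norm := noncomm_ring) heb * c
  have hpe : p * e = p := by
    rw [hp_def]; linear_combination (norm := noncomm_ring) b * hce
  have heq : e * q = q := by
    rw [hq_def]; linear_combination (norm := noncomm_ring) hec * b
  have hqe : q * e = q := by
    rw [hq_def]; linear_combination (norm := noncomm_ring) c * hbe
  obtain ⟨d₀, hd₀⟩ := hreg (q * (e - p))
  obtain ⟨d, hd_def⟩ : ∃ d : R, d = e * d₀ * e := ⟨_, rfl⟩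
  have hxe : q * (e - p) * e = q * (e - p) := by
    linear_combination (norm := noncomm_ring) q * he' - q * hpe
  have hex : e * (q * (e - p)) = q * (e - p) := by
    linear_combination (norm := noncomm_ring) heq * (e - p)
  have hd : q * (e - p) * d * (q * (e - p)) = q * (e - p) := by
    rw [hd_def]
    have h1 : q * (e - p) * (e * d₀ * e) * (q * (e - p)) =
        (q * (e - p) * e) * d₀ * (e * (q * (e - p))) := by noncomm_ring
    rw [h1, hxe, hex, hd₀]
  obtain ⟨g, hg_def⟩ : ∃ g : R, g = d * (q * (e - p)) := ⟨_, rfl⟩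
  have hgg : g * g = g := by
    rw [hg_def]; linear_combination (norm := noncomm_ring) d * hd
  have hxp : q * (e - p) * p = 0 := by
    linear_combination (norm := noncomm_ring) q * hep - q * hp
  have hgp : g * p = 0 := by
    rw [hg_def]; linear_combination (norm := noncomm_ring) d * hxp
  have hge : g * e = g := by
    rw [hg_def]; linear_combination (norm := noncomm_ring) d * hxe
  have hxg : q * (e - p) * g = q * (e - p) := by
    rw [hg_def]; linear_combination (norm := noncomm_ring) hd
  have hxep : q * (e - p) * (e - p) = q * (e - p) := by
    linear_combination (norm := noncomm_ring) q * he' - q * hep - q * hpe + q * hp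
  have hgep : g * (e - p) = g := by
    rw [hg_def]; linear_combination (norm := noncomm_ring) d * hxep
  obtain ⟨r, hr_def⟩ : ∃ r : R, r = (e - p) * g := ⟨_, rfl⟩
  have hrr : r * r = r := by
    rw [hr_def]
    linear_combination (norm := noncomm_ring) (e - p) * hgep * g + (e - p) * hgg
  have hpr : p * r = 0 := by
    rw [hr_def]
    linear_combination (norm := noncomm_ring) hpe * g - hp * g
  have hrp : r * p = 0 := by
    rw [hr_def]; linear_combination (norm := noncomm_ring) (e - p) * hgp
  obtain ⟨f, hf_def⟩ : ∃ f : R, f = p + r := ⟨_, rfl⟩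
  have hff : f * f = f := by
    rw [hf_def]; linear_combination (norm := noncomm_ring) hp + hpr + hrp + hrr
  have hef : e * f = f := by
    rw [hf_def, hr_def]
    linear_combination (norm := noncomm_ring) hep + he' * g - hep * g
  have hfe : f * e = f := by
    rw [hf_def, hr_def]
    linear_combination (norm := noncomm_ring) hpe + (e - p) * hge
  have hxb : q * (e - p) * b = 0 := by
    linear_combination (norm := noncomm_ring) q * heb - q * hpb
  have hfb : f * b = b := by
    rw [hf_def, hr_def, hg_def]
    linear_combination (norm := noncomm_ring) hpb + (e - p) * d * hxb
  have hqf : q * f = q := by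
    rw [hf_def, hr_def]
    linear_combination (norm := noncomm_ring) hxg + hqe
  have hbf : b * f = b := by
    linear_combination (norm := noncomm_ring) b * hqf - hbq * f + hbq
  have hfbf : f * b * f = b := by
    linear_combination (norm := noncomm_ring) hfb * f + hbf
  refine ⟨f, hff, hef, hfe, ⟨hu, f - b, ?_⟩, ?_⟩
  · have ha' : a = 1 - b := by rw [hbdef]; noncomm_ring
    rw [ha']
    linear_combination (norm := noncomm_ring) hfbf - hff * f - hff
  · have hρf : ρ f = ρ p + ρ r := by
      rw [hf_def]; exact horthadd p r hp hrr hpr hrp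
    have h1 : ρ p ≤ ρ b := by
      rw [hp_def]; exact le_trans (hmul b c) (min_le_left _ _)
    have h2 : ρ r ≤ ρ b := by
      calc ρ r ≤ ρ g := by
              rw [hr_def]; exact le_trans (hmul _ _) (min_le_right _ _)
        _ ≤ ρ (q * (e - p)) := by
              rw [hg_def]; exact le_trans (hmul _ _) (min_le_right _ _)
        _ ≤ ρ q := le_trans (hmul _ _) (min_le_left _ _)
        _ ≤ ρ b := by
              rw [hq_def]; exact le_trans (hmul _ _) (min_le_right _ _)
    rw [← hbdef, hρf]; linarith
end

section
/- Let R be a unital ring, e an idempotent, a ∈ GL(R) with e and aea⁻¹ orthogonal, and S a commutative unital subring of eRe. Then the map φ(x) := ax + xa⁻¹ + 1 − x − axa⁻¹ is an injective group homomorphism from the Boolean group (E(S), △) of idempotents of S into GL(R), where x △ y = x + y − 2xy. -/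
private theorem aux_hom {R : Type*} [Ring R] (A B x y : R)
    (hAB : A * B = 1) (hBA : B * A = 1)
    (h1 : x * A * y = 0) (h2 : x * B * y = 0) :
    A * (x + y - 2 * (x * y)) + (x + y - 2 * (x * y)) * B
      + 1 - (x + y - 2 * (x * y)) - A * (x + y - 2 * (x * y)) * B
    = (A * x + x * B + 1 - x - A * x * B) * (A * y + y * B + 1 - y - A * y * B) := by
  have h1' : ∀ r, x * (A * (y * r)) = 0 := fun r => by
    rw [← mul_assoc, ← mul_assoc, h1, zero_mul]
  have h1'' : x * (A * y) = 0 := by rw [← mul_assoc, h1]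
  have h2' : ∀ r, x * (B * (y * r)) = 0 := fun r => by
    rw [← mul_assoc, ← mul_assoc, h2, zero_mul]
  have h2'' : x * (B * y) = 0 := by rw [← mul_assoc, h2]
  have hBA' : ∀ r, B * (A * r) = r := fun r => by rw [← mul_assoc, hBA, one_mul]
  have hAB' : ∀ r, A * (B * r) = r := fun r => by rw [← mul_assoc, hAB, one_mul]
  simp only [mul_add, add_mul, mul_sub, sub_mul, mul_one, one_mul, mul_assoc,
    hBA', hAB', h1', h1'', h2', h2'', mul_zero, zero_mul, add_zero, zero_add,
    sub_zero, zero_sub]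
  noncomm_ring

/-- Given an idempotent `e`, a unit `a` with `e ⊥ aea⁻¹`, and a commutative
unital subring `S` of the corner ring `eRe`, the map
`x ↦ ax + xa⁻¹ + 1 − x − axa⁻¹` is an injective group homomorphism from the
Boolean group of idempotents of `S` into `GL(R)`. -/
theorem boolean_group_embedding {R : Type*} [Ring R] (e : R)
    (he : IsIdempotentElem e) (a : Rˣ)
    (horth1 : e * ((↑a : R) * e * ↑a⁻¹) = 0) (horth2 : ((↑a : R) * e * ↑a⁻¹) * e = 0)
    (S : Set R)
    (hScorner : ∀ x ∈ S, e * x * e = x)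
    (hSone : e ∈ S)
    (hSadd : ∀ x ∈ S, ∀ y ∈ S, x + y ∈ S)
    (hSneg : ∀ x ∈ S, -x ∈ S)
    (hSmul : ∀ x ∈ S, ∀ y ∈ S, x * y ∈ S)
    (hScomm : ∀ x ∈ S, ∀ y ∈ S, x * y = y * x) :
    (∀ x ∈ S, IsIdempotentElem x →
        IsUnit ((↑a : R) * x + x * ↑a⁻¹ + 1 - x - (↑a : R) * x * ↑a⁻¹)) ∧
    (∀ x ∈ S, ∀ y ∈ S, IsIdempotentElem x → IsIdempotentElem y →
        ((↑a : R) * (x + y - 2 * (x * y)) + (x + y - 2 * (x * y)) * ↑a⁻¹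
            + 1 - (x + y - 2 * (x * y)) - (↑a : R) * (x + y - 2 * (x * y)) * ↑a⁻¹)
          = ((↑a : R) * x + x * ↑a⁻¹ + 1 - x - (↑a : R) * x * ↑a⁻¹)
            * ((↑a : R) * y + y * ↑a⁻¹ + 1 - y - (↑a : R) * y * ↑a⁻¹)) ∧
    (∀ x ∈ S, ∀ y ∈ S, IsIdempotentElem x → IsIdempotentElem y →
        ((↑a : R) * x + x * ↑a⁻¹ + 1 - x - (↑a : R) * x * ↑a⁻¹)
          = ((↑a : R) * y + y * ↑a⁻¹ + 1 - y - (↑a : R) * y * ↑a⁻¹) → x = y) := by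
  set A : R := (↑a : R) with hA
  set B : R := (↑a⁻¹ : R) with hB
  have hAB : A * B = 1 := a.mul_inv
  have hBA : B * A = 1 := a.inv_mul
  -- e * A * e = 0
  have heAe : e * A * e = 0 := by
    have := congrArg (· * A) horth1
    simpa [mul_assoc, hBA] using this
  have heBe : e * B * e = 0 := by
    have := congrArg (B * ·) horth2
    simp only [zero_mul, mul_zero] at this
    calc e * B * e = B * (A * (e * (B * e))) := by rw [← mul_assoc, hBA]; noncomm_ring
      _ = B * ((A * e * B) * e) := by noncomm_ring
      _ = 0 := by rw [this]
  -- key zero products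
  have hxAy : ∀ x ∈ S, ∀ y ∈ S, x * A * y = 0 := by
    intro x hx y hy
    calc x * A * y = (e * x * e) * A * (e * y * e) := by rw [hScorner x hx, hScorner y hy]
      _ = (e * x) * (e * A * e) * (y * e) := by noncomm_ring
      _ = 0 := by rw [heAe, mul_zero, zero_mul]
  have hxBy : ∀ x ∈ S, ∀ y ∈ S, x * B * y = 0 := by
    intro x hx y hy
    calc x * B * y = (e * x * e) * B * (e * y * e) := by rw [hScorner x hx, hScorner y hy]
      _ = (e * x) * (e * B * e) * (y * e) := by noncomm_ring
      _ = 0 := by rw [heBe, mul_zero, zero_mul]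
  have hom : ∀ x ∈ S, ∀ y ∈ S,
      (A * (x + y - 2 * (x * y)) + (x + y - 2 * (x * y)) * B
          + 1 - (x + y - 2 * (x * y)) - A * (x + y - 2 * (x * y)) * B)
        = (A * x + x * B + 1 - x - A * x * B) * (A * y + y * B + 1 - y - A * y * B) :=
    fun x hx y hy => aux_hom A B x y hAB hBA (hxAy x hx y hy) (hxBy x hx y hy)
  refine ⟨?_, fun x hx y hy _ _ => hom x hx y hy, ?_⟩
  · -- units: φ(x)² = φ(0) = 1
    intro x hx hxid
    have hsq : (A * x + x * B + 1 - x - A * x * B) * (A * x + x * B + 1 - x - A * x * B)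
        = 1 := by
      have h0 : x + x - 2 * (x * x) = 0 := by rw [hxid]; noncomm_ring
      have := (hom x hx x hx).symm
      rw [h0] at this
      simpa using this
    exact ⟨⟨_, _, hsq, hsq⟩, rfl⟩
  · -- injectivity
    intro x hx y hy hxid hyid heq
    have corner : ∀ z ∈ S, e * (A * z + z * B + 1 - z - A * z * B) * e = e - z := by
      intro z hz
      have hz' := hScorner z hz
      calc e * (A * z + z * B + 1 - z - A * z * B) * e
          = e * (A * (e*z*e) + (e*z*e) * B + 1 - (e*z*e) - A * (e*z*e) * B) * e := by
            rw [hz']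
        _ = (e*A*e)*(z*(e*e)) + (e*e)*(z*(e*B*e)) + e*1*e - e*(e*z*e)*e
            - (e*A*e)*(z*(e*B*e)) := by noncomm_ring
        _ = e - z := by
            rw [heAe, heBe, hz', hz', mul_one, he.eq]
            simp
    have h1 := corner x hx
    have h2 := corner y hy
    have := congrArg (fun r => e * r * e) heq
    rw [h1, h2] at this
    exact sub_right_inj.mp this
end

section
/- Let R be a unital ring, n a positive integer, and a ∈ R, b ∈ R with ba = e₁ + … + e_{n−1} for pairwise orthogonal idempotents e₁, …, eₙ with e₁ + … + eₙ = 1, where the eᵢ arise from a decomposition R = I ⊕ aI ⊕ … ⊕ a^{n−1}I with I = e₁R, a^{i−1}I = eᵢR, and a^{n−1}I = rAnn(a). Then the elements s_{ij} := a^{i−1} b^{j−1} e_j (for 1 ≤ i, j ≤ n) form a family of matrix units for R, and a = s_{21} + s_{32} + … + s_{n,n−1}; in particular R contains a unital subring isomorphic to Mₙ(Z(R)) containing a. -/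
theorem matrixUnits_ringHom_aux {R : Type*} [Ring R] {n : ℕ} (i0 : Fin n)
    (s : Fin n → Fin n → R)
    (hmul : ∀ i j k l, s i j * s k l = if j = k then s i l else 0)
    (hsum : ∑ i, s i i = 1) :
    ∃ φ : Matrix (Fin n) (Fin n) (Subring.center R) →+* R,
      Function.Injective φ ∧ ∀ M, φ M = ∑ i, ∑ j, (M i j : R) * s i j := by
  have comm : ∀ (c : Subring.center R) (x : R), x * (c : R) = (c : R) * x :=
    fun c x => Subring.mem_center_iff.mp c.2 x
  refine ⟨{ toFun := fun M => ∑ i, ∑ j, (M i j : R) * s i j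
            map_one' := ?_
            map_mul' := ?_
            map_zero' := ?_
            map_add' := ?_ }, ?_, fun _ => rfl⟩
  · simp only [Matrix.one_apply, apply_ite (fun c : Subring.center R => (c : R)),
      OneMemClass.coe_one, ZeroMemClass.coe_zero, ite_mul, one_mul, zero_mul,
      Finset.sum_ite_eq, Finset.mem_univ, if_true]
    exact hsum
  · intro M N
    have key : ∀ (i j k l : Fin n), ((M i j : R) * s i j) * ((N k l : R) * s k l)
        = if j = k then (M i j : R) * (N k l : R) * s i l else 0 := by
      intro i j k l
      rw [mul_assoc ((M i j : R)), ← mul_assoc (s i j), comm (N k l) (s i j),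
        mul_assoc ((N k l : R)), hmul, ← mul_assoc ((M i j : R))]
      split <;> simp
    simp only [Matrix.mul_apply, AddSubmonoidClass.coe_finset_sum, MulMemClass.coe_mul,
      Finset.sum_mul, Finset.mul_sum, key]
    simp only [Finset.sum_ite_eq', Finset.mem_univ, if_true]
    conv_rhs => rw [Finset.sum_comm]
    conv_lhs => rw [Finset.sum_comm]
    exact Finset.sum_congr rfl fun l _ => Finset.sum_comm
  · simp
  · intro M N
    simp [Matrix.add_apply, add_mul, Finset.sum_add_distrib]
  · rw [injective_iff_map_eq_zero]
    intro M hM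
    have hM' : ∑ i, ∑ j, (M i j : R) * s i j = 0 := hM
    have hz : ∀ i j : Fin n, (M i j : R) * s i0 i0 = 0 := by
      intro i j
      have expand : s i0 i * (∑ p, ∑ q, (M p q : R) * s p q) * s j i0
          = (M i j : R) * s i0 i0 := by
        simp only [Finset.mul_sum, Finset.sum_mul]
        have term : ∀ p q : Fin n, s i0 i * ((M p q : R) * s p q) * s j i0
            = if i = p then (if q = j then (M p q : R) * s i0 i0 else 0) else 0 := by
          intro p q
          rw [← mul_assoc, comm (M p q), mul_assoc ((M p q : R)), hmul, mul_ite, mul_zero,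
            ite_mul, zero_mul, mul_assoc, hmul, mul_ite, mul_zero]
        simp only [term]
        rw [Finset.sum_comm]
        simp [Finset.sum_ite_eq, Finset.sum_ite_eq']
      rw [hM', mul_zero, zero_mul] at expand
      exact expand.symm
    ext i j
    have h0 : (M i j : R) = 0 := by
      have : (M i j : R) = ∑ k, (M i j : R) * s k k := by
        rw [← Finset.mul_sum, hsum, mul_one]
      rw [this]
      refine Finset.sum_eq_zero fun k _ => ?_
      have hk : s k k = s k i0 * (s i0 i0 * s i0 k) := by
        rw [hmul, if_pos rfl, hmul, if_pos rfl]
      rw [hk, ← mul_assoc, ← comm (M i j) (s k i0), mul_assoc (s k i0), ← mul_assoc ((M i j : R)),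
        hz i j, zero_mul, mul_zero]
    simpa using h0



/-- Given a decomposition `R = I ⊕ aI ⊕ … ⊕ a^{n−1}I` realized by pairwise
orthogonal idempotents `e₁, …, eₙ` summing to `1` with `a^{i−1}I = eᵢR`,
`a^{n−1}I = rAnn(a)`, and `b` with `ba = e₁ + … + e_{n−1}`, the elements
`s_{ij} := a^{i−1} b^{j−1} e_j` form a family of matrix units for `R`,
`a = s_{21} + … + s_{n,n−1}`, and in particular `R` contains a unital subring
isomorphic to `Mₙ(Z(R))` containing `a`. -/
theorem matrix_units_of_nilpotent_decomposition {R : Type*} [Ring R]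
    (n : ℕ) (hn : 0 < n) (a b : R) (e : Fin n → R)
    (hidem : ∀ i, IsIdempotentElem (e i))
    (horth : ∀ i j, i ≠ j → e i * e j = 0)
    (hsum : ∑ i, e i = 1)
    (hI : ∀ i : Fin n, (Set.range fun y : R => e i * y)
        = Set.range fun y : R => a ^ (i : ℕ) * (e ⟨0, hn⟩ * y))
    (hann : (Set.range fun y : R => a ^ (n - 1) * (e ⟨0, hn⟩ * y)) = {x : R | a * x = 0})
    (hba : b * a = 1 - e ⟨n - 1, by omega⟩) :
    (∀ i j k l : Fin n,
        (a ^ (i : ℕ) * b ^ (j : ℕ) * e j) * (a ^ (k : ℕ) * b ^ (l : ℕ) * e l)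
          = if j = k then a ^ (i : ℕ) * b ^ (l : ℕ) * e l else 0) ∧
    (∑ i : Fin n, a ^ (i : ℕ) * b ^ (i : ℕ) * e i = 1) ∧
    (a = ∑ i : Fin n,
        if h : (i : ℕ) + 1 < n then a ^ ((i : ℕ) + 1) * b ^ (i : ℕ) * e i else 0) ∧
    (∃ φ : Matrix (Fin n) (Fin n) (Subring.center R) →+* R,
        Function.Injective φ ∧ a ∈ Set.range φ) := by
  -- pick witnesses u i with e i = a^i * (e 0 * u i)
  have hu' : ∀ i : Fin n, ∃ u : R, a ^ (i : ℕ) * (e ⟨0, hn⟩ * u) = e i := by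
    intro i
    have : e i ∈ Set.range fun y : R => e i * y := ⟨e i, hidem i⟩
    rw [hI i] at this
    exact this
  choose u hu using hu'
  -- projection formula
  have proj : ∀ (j : Fin n) (k : ℕ) (hk : k < n) (x : R),
      e j * (a ^ k * (e ⟨0, hn⟩ * x)) = if (j : ℕ) = k then a ^ k * (e ⟨0, hn⟩ * x) else 0 := by
    intro j k hk x
    have mem : a ^ k * (e ⟨0, hn⟩ * x)
        ∈ Set.range fun y : R => a ^ (((⟨k, hk⟩ : Fin n)) : ℕ) * (e ⟨0, hn⟩ * y) := ⟨x, rfl⟩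
    rw [← hI ⟨k, hk⟩] at mem
    obtain ⟨y, hy⟩ := mem
    simp only at hy
    split
    · next h =>
      have : j = ⟨k, hk⟩ := Fin.ext h
      rw [← hy, this, ← mul_assoc, hidem]
    · next h =>
      have : j ≠ ⟨k, hk⟩ := fun hc => h (by rw [hc])
      rw [← hy, ← mul_assoc, horth _ _ this, zero_mul]
  have han : ∀ x : R, a * (a ^ (n - 1) * (e ⟨0, hn⟩ * x)) = 0 := by
    intro x
    have mem : a ^ (n - 1) * (e ⟨0, hn⟩ * x)
        ∈ Set.range fun y : R => a ^ (n - 1) * (e ⟨0, hn⟩ * y) := ⟨x, rfl⟩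
    rw [hann] at mem
    exact mem
  have step : ∀ (k : ℕ), k + 1 < n → ∀ x : R,
      b * (a ^ (k + 1) * (e ⟨0, hn⟩ * x)) = a ^ k * (e ⟨0, hn⟩ * x) := by
    intro k hk x
    rw [pow_succ', mul_assoc a, ← mul_assoc b a, hba, sub_mul, one_mul]
    have h1 : e ⟨n - 1, by omega⟩ * (a ^ k * (e ⟨0, hn⟩ * x)) = 0 := by
      rw [proj _ k (by omega) x, if_neg (by simp; omega)]
    rw [h1, sub_zero]
  have bpow : ∀ (j k : ℕ), j + k < n → ∀ x : R,
      b ^ j * (a ^ (j + k) * (e ⟨0, hn⟩ * x)) = a ^ k * (e ⟨0, hn⟩ * x) := by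
    intro j
    induction j with
    | zero => intro k h x; simp
    | succ m ih =>
      intro k h x
      rw [pow_succ, mul_assoc, show m + 1 + k = (m + k) + 1 by omega,
        step (m + k) (by omega) x, ih k (by omega) x]
  have bpow' : ∀ (j : ℕ), j < n → ∀ x : R,
      b ^ j * (a ^ j * (e ⟨0, hn⟩ * x)) = e ⟨0, hn⟩ * x := by
    intro j hj x
    have := bpow j 0 (by omega) x
    simpa using this
  have hbe : ∀ l : Fin n, b ^ (l : ℕ) * e l = e ⟨0, hn⟩ * u l := by
    intro l
    conv_lhs => rw [← hu l]
    exact bpow' (l : ℕ) l.isLt (u l)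
  -- matrix unit multiplication
  have hmul : ∀ i j k l : Fin n,
      (a ^ (i : ℕ) * b ^ (j : ℕ) * e j) * (a ^ (k : ℕ) * b ^ (l : ℕ) * e l)
        = if j = k then a ^ (i : ℕ) * b ^ (l : ℕ) * e l else 0 := by
    intro i j k l
    have h1 : a ^ (k : ℕ) * b ^ (l : ℕ) * e l = a ^ (k : ℕ) * (e ⟨0, hn⟩ * u l) := by
      rw [mul_assoc, hbe]
    rw [h1, mul_assoc (a ^ (i : ℕ) * b ^ (j : ℕ)) (e j), proj j (k : ℕ) k.isLt (u l)]
    by_cases hjk : j = k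
    · rw [if_pos (by rw [hjk]), if_pos hjk]
      subst hjk
      rw [mul_assoc (a ^ (i : ℕ)) (b ^ (j : ℕ)), bpow' (j : ℕ) j.isLt (u l), ← hbe l,
        ← mul_assoc]
    · rw [if_neg (fun h => hjk (Fin.ext h)), mul_zero, if_neg hjk]
  have diag : ∀ i : Fin n, a ^ (i : ℕ) * b ^ (i : ℕ) * e i = e i := by
    intro i
    rw [mul_assoc, hbe, hu]
  have hdiagsum : ∑ i : Fin n, a ^ (i : ℕ) * b ^ (i : ℕ) * e i = 1 := by
    rw [Finset.sum_congr rfl fun i _ => diag i, hsum]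
  -- a as sum of subdiagonal matrix units
  have haei : ∀ i : Fin n,
      (if h : (i : ℕ) + 1 < n then a ^ ((i : ℕ) + 1) * b ^ (i : ℕ) * e i else 0) = a * e i := by
    intro i
    split
    · next h =>
      rw [pow_succ', mul_assoc a (a ^ (i : ℕ)) (b ^ (i : ℕ)), mul_assoc a, diag i]
    · next h =>
      have hi : (i : ℕ) = n - 1 := by have := i.isLt; omega
      have : a * e i = 0 := by
        rw [← hu i, hi, ← mul_assoc, ← pow_succ']
        have := han (u i)
        rw [← mul_assoc] at this
        rw [← pow_succ'] at this
        exact this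
      rw [this]
  have hasum : a = ∑ i : Fin n,
      if h : (i : ℕ) + 1 < n then a ^ ((i : ℕ) + 1) * b ^ (i : ℕ) * e i else 0 := by
    rw [Finset.sum_congr rfl fun i _ => haei i, ← Finset.mul_sum, hsum, mul_one]
  refine ⟨hmul, hdiagsum, hasum, ?_⟩
  obtain ⟨φ, hinj, hφ⟩ := matrixUnits_ringHom_aux ⟨0, hn⟩
    (fun i j => a ^ (i : ℕ) * b ^ (j : ℕ) * e j) hmul hdiagsum
  refine ⟨φ, hinj, Matrix.of (fun i j =>
    if (i : ℕ) = (j : ℕ) + 1 then (1 : Subring.center R) else 0), ?_⟩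
  rw [hφ, Finset.sum_comm]
  conv_rhs => rw [hasum]
  refine Finset.sum_congr rfl fun j _ => ?_
  by_cases h : (j : ℕ) + 1 < n
  · rw [dif_pos h, Finset.sum_eq_single (⟨(j : ℕ) + 1, h⟩ : Fin n)]
    · simp
    · intro i _ hne
      have hval : ¬((i : ℕ) = (j : ℕ) + 1) := fun hv => hne (Fin.ext hv)
      simp [hval]
    · intro h'; exact absurd (Finset.mem_univ _) h'
  · rw [dif_neg h]
    refine Finset.sum_eq_zero fun i _ => ?_
    have hval : ¬((i : ℕ) = (j : ℕ) + 1) := by have := i.isLt; omega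
    simp [hval]
end
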